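/- arXiv:1807.00649 — 6 statements merged into one kernel-verified Lean document; each statement's English description precedes it below -/
import Mathlib

section
/- For the stationary fluid Tangle model with d types and unit arrival rate, any time-independent solution (x_i, l_i, w_i) of the equations l_i^2 = 2 x_i l_i and l_i - x_i = u_i h with u_i = 2 x_i l_i / (sum_j l_j^2) must have, for each i, either l_i = 0 or l_i = 2h/k where k is the number of nonzero components; in particular the nonzero components satisfy x_i = h/k, w_i = h/k, l_i = 2h/k. -/
open Finset

/-
On a nonzero component the first equation forces x_i = l_i / 2, and the second then reads
∑_j l_j² = 2 h l_i. So all nonzero components share one value c, and comparing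
∑_j l_j² = k c² with 2 h c gives k c = 2 h.
-/

lemma eq_half_of_sq_eq_two_mul_mul {a b : ℝ} (ha : a ≠ 0) (h : a ^ 2 = 2 * b * a) :
    b = a / 2 := by
  have : a = 2 * b := mul_right_cancel₀ ha (by linear_combination h)
  linarith

lemma eq_two_mul_mul_of_static {a b h S : ℝ} (ha : a ≠ 0) (hS : S ≠ 0)
    (h₁ : a ^ 2 = 2 * b * a) (h₂ : a - b = h * (2 * b * a) / S) :
    S = 2 * h * a := by
  rw [eq_half_of_sq_eq_two_mul_mul ha h₁] at h₂
  field_simp at h₂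
  linear_combination h₂

lemma sum_sq_eq_card_mul_sq {ι : Type*} [Fintype ι] (f : ι → ℝ) (c : ℝ)
    (hf : ∀ i, f i ≠ 0 → f i = c) :
    ∑ i, f i ^ 2 = #{i | f i ≠ 0} * c ^ 2 := by
  rw [← sum_filter_of_ne (p := fun i => f i ≠ 0) fun i _ hi => by simpa using hi,
    sum_congr rfl fun i hi => by rw [hf i (mem_filter.mp hi).2], sum_const, nsmul_eq_mul]

lemma sum_sq_ne_zero {ι : Type*} [Fintype ι] {f : ι → ℝ} {i : ι} (hi : f i ≠ 0) :
    ∑ j, f j ^ 2 ≠ 0 :=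
  (sum_pos' (fun j _ => sq_nonneg (f j)) ⟨i, mem_univ i, by positivity⟩).ne'

theorem fluid_tangle_static_solution_general
    (d : ℕ) (h : ℝ)
    (x l w : Fin d → ℝ)
    (heq1 : ∀ i, (l i) ^ 2 = 2 * x i * l i)
    (heq2 : ∀ i, l i - x i = h * (2 * x i * l i) / (∑ j, (l j) ^ 2))
    (hw : ∀ i, w i = l i - x i)
    (k : ℕ) (hk : k = (Finset.univ.filter (fun i => l i ≠ 0)).card) :
    ∀ i, l i = 0 ∨ (l i = 2 * h / k ∧ x i = h / k ∧ w i = h / k) := by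
  intro i
  by_cases hi : l i = 0
  · exact Or.inl hi
  have hS₀ := sum_sq_ne_zero hi
  have hS : ∀ j, l j ≠ 0 → ∑ j, l j ^ 2 = 2 * h * l j := fun j hj =>
    eq_two_mul_mul_of_static hj hS₀ (heq1 j) (heq2 j)
  have hh : 2 * h ≠ 0 := fun h0 => hS₀ (by rw [hS i hi, h0, zero_mul])
  have hconst : ∀ j, l j ≠ 0 → l j = l i := fun j hj =>
    mul_left_cancel₀ hh ((hS j hj).symm.trans (hS i hi))
  have hkl : (k : ℝ) * l i = 2 * h := by
    have := (sum_sq_eq_card_mul_sq l (l i) hconst).symm.trans (hS i hi)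
    rw [← hk] at this
    exact mul_right_cancel₀ hi (by linear_combination this)
  have hk₀ : (k : ℝ) ≠ 0 := fun h0 => hh (by rw [← hkl, h0, zero_mul])
  have hl : l i = 2 * h / k := eq_div_of_mul_eq hk₀ (by rw [mul_comm, hkl])
  have hx := eq_half_of_sq_eq_two_mul_mul hi (heq1 i)
  exact Or.inr ⟨hl, by rw [hx, hl]; ring, by rw [hw, hx, hl]; ring⟩

/-- Static solutions of the fluid Tangle model: each nonzero component equals 2h/k,
with x_i = h/k and w_i = h/k, where k is the number of nonzero components. -/
theorem fluid_tangle_static_solution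
    (d : ℕ) (hd : 1 ≤ d) (h : ℝ) (hh : 0 < h)
    (x l w : Fin d → ℝ)
    (hl_nonneg : ∀ i, 0 ≤ l i)
    (hl_ne : ∃ i, l i ≠ 0)
    (heq1 : ∀ i, (l i) ^ 2 = 2 * x i * l i)
    (heq2 : ∀ i, l i - x i = h * (2 * x i * l i) / (∑ j, (l j) ^ 2))
    (hw : ∀ i, w i = l i - x i)
    (k : ℕ) (hk : k = (Finset.univ.filter (fun i => l i ≠ 0)).card) :
    ∀ i, l i = 0 ∨ (l i = 2 * h / k ∧ x i = h / k ∧ w i = h / k) :=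
  fluid_tangle_static_solution_general d h x l w heq1 heq2 hw k hk
end

section
/- Every complex solution z of the equation 1 + h z = (1/2) e^{-z h}, with h > 0, satisfies Re(z) < 0. -/
/-!
In the closed right half-plane `Re w ≥ 0` the left side `1 + w` has modulus at least `1`, while
`|e^{-w}| = e^{-Re w} ≤ 1`, so the right side has modulus at most `1/2`. Apply this to `w = h z`.
-/

namespace Complex

theorem one_le_norm_one_add_of_re_nonneg {w : ℂ} (hw : 0 ≤ w.re) : 1 ≤ ‖1 + w‖ :=
  calc (1 : ℝ) ≤ (1 + w).re := by simpa using hw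
    _ ≤ ‖1 + w‖ := re_le_norm _

theorem norm_exp_neg_le_one_of_re_nonneg {w : ℂ} (hw : 0 ≤ w.re) : ‖exp (-w)‖ ≤ 1 := by
  rw [norm_exp, neg_re, Real.exp_le_one_iff]
  linarith

theorem one_add_ne_mul_exp_neg {c w : ℂ} (hc : ‖c‖ < 1) (hw : 0 ≤ w.re) :
    1 + w ≠ c * exp (-w) := by
  intro heq
  have hrhs : ‖c * exp (-w)‖ < 1 :=
    calc ‖c * exp (-w)‖ = ‖c‖ * ‖exp (-w)‖ := norm_mul _ _
      _ ≤ ‖c‖ := mul_le_of_le_one_right (norm_nonneg _) (norm_exp_neg_le_one_of_re_nonneg hw)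
      _ < 1 := hc
  have hlhs := one_le_norm_one_add_of_re_nonneg hw
  rw [heq] at hlhs
  linarith

end Complex

/-- Every complex solution of 1 + hz = (1/2) e^{-zh} with h > 0 has negative real part. -/
theorem solutions_in_left_half_plane
    (h : ℝ) (hh : 0 < h) (z : ℂ)
    (heq : 1 + (h : ℂ) * z = (1 / 2) * Complex.exp (-z * h)) :
    z.re < 0 := by
  by_contra! hz
  have hw : 0 ≤ ((h : ℂ) * z).re := by
    rw [Complex.re_ofReal_mul]
    exact mul_nonneg hh.le hz
  have hc : ‖(1 / 2 : ℂ)‖ < 1 := by norm_num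
  rw [show -z * h = -((h : ℂ) * z) by ring] at heq
  exact Complex.one_add_ne_mul_exp_neg hc hw heq
end

section
/- Under the conditions D > 0, δ > 0, w > 0 and D < wδ/4, for every complex z with Re(z) ≥ 0 and every a, |λ_a(z)| = |(D e^{-zτ}/(z+δ)) · 2 cos(2πa/n)| < w/2. Hence no z with Re(z) ≥ 0 can satisfy λ_a(z) = w/(1 - e^{-wz}), since the latter has modulus ≥ w/2. -/
open Complex

lemma norm_exp_neg_mul_ofReal_le_one {z : ℂ} {t : ℝ} (hz : 0 ≤ z.re) (ht : 0 ≤ t) :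
    ‖exp (-z * t)‖ ≤ 1 := by
  rw [norm_exp, Real.exp_le_one_iff, neg_mul, neg_re, re_mul_ofReal, neg_nonpos]
  exact mul_nonneg hz ht

lemma le_norm_add_ofReal {z : ℂ} {δ : ℝ} (hz : 0 ≤ z.re) : δ ≤ ‖z + δ‖ :=
  calc δ ≤ (z + δ).re := by rw [add_re, ofReal_re]; linarith
    _ ≤ ‖z + δ‖ := re_le_norm _

lemma half_le_norm_div_one_sub {u : ℂ} {w : ℝ} (hw : 0 ≤ w) (hu : ‖u‖ ≤ 1) (hu1 : u ≠ 1) :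
    w / 2 ≤ ‖(w : ℂ) / (1 - u)‖ := by
  have hpos : 0 < ‖1 - u‖ := norm_pos_iff.mpr (sub_ne_zero.mpr hu1.symm)
  have hle : ‖1 - u‖ ≤ 2 := by
    calc ‖1 - u‖ ≤ ‖(1 : ℂ)‖ + ‖u‖ := norm_sub_le _ _
      _ ≤ 2 := by rw [norm_one]; linarith
  rw [norm_div, norm_real, Real.norm_of_nonneg hw]
  exact div_le_div_of_nonneg_left hw hpos hle

lemma norm_delayed_feedback_mul_le {D δ τ c : ℝ} (hD : 0 ≤ D) (hδ : 0 < δ) (hτ : 0 ≤ τ)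
    (hc : |c| ≤ 1) {z : ℂ} (hz : 0 ≤ z.re) :
    ‖(D : ℂ) * exp (-z * τ) / (z + δ) * 2 * (c : ℂ)‖ ≤ 2 * D / δ := by
  rw [norm_mul, norm_mul, norm_div, norm_mul, norm_real, norm_real, Complex.norm_two,
    Real.norm_of_nonneg hD, Real.norm_eq_abs]
  calc D * ‖exp (-z * τ)‖ / ‖z + δ‖ * 2 * |c| ≤ D * 1 / δ * 2 * 1 := by
        gcongr
        · exact norm_exp_neg_mul_ofReal_le_one hz hτ
        · exact le_norm_add_ofReal hz
    _ = 2 * D / δ := by ring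

theorem ring_stability_condition_general
    (D δ w τ : ℝ) (hD : 0 < D) (hδ : 0 < δ) (hw : 0 < w) (hτ : 0 ≤ τ)
    (hcond : D < w * δ / 4)
    (n : ℕ) (a : ℤ)
    (z : ℂ) (hz : 0 ≤ z.re) :
    ‖((D : ℂ) * Complex.exp (-z * τ) / (z + δ)) * 2 *
        (Real.cos (2 * Real.pi * a / n) : ℂ)‖ < w / 2 ∧
    (Complex.exp (-(w : ℂ) * z) ≠ 1 →
      ((D : ℂ) * Complex.exp (-z * τ) / (z + δ)) * 2 *
          (Real.cos (2 * Real.pi * a / n) : ℂ) ≠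
        (w : ℂ) / (1 - Complex.exp (-(w : ℂ) * z))) := by
  have hsmall : 2 * D / δ < w / 2 := by
    rw [div_lt_div_iff₀ hδ two_pos]
    linarith
  have hlam := (norm_delayed_feedback_mul_le hD.le hδ hτ
    (Real.abs_cos_le_one (2 * Real.pi * a / n)) hz).trans_lt hsmall
  refine ⟨hlam, fun hexp heq => ?_⟩
  have hexp_le : ‖exp (-(w : ℂ) * z)‖ ≤ 1 := by
    rw [neg_mul_comm, mul_comm]
    exact norm_exp_neg_mul_ofReal_le_one hz hw.le
  have hbig := half_le_norm_div_one_sub hw.le hexp_le hexp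
  rw [← heq] at hbig
  linarith

/-- Under D < wδ/4, for Re(z) ≥ 0, |λ_a(z)| < w/2, hence λ_a(z) ≠ w/(1 - e^{-wz})
since the latter has modulus ≥ w/2. -/
theorem ring_stability_condition
    (D δ w τ : ℝ) (hD : 0 < D) (hδ : 0 < δ) (hw : 0 < w) (hτ : 0 ≤ τ)
    (hcond : D < w * δ / 4)
    (n : ℕ) (hn : 1 ≤ n) (a : ℤ) (ha : 1 ≤ a ∧ a ≤ n)
    (z : ℂ) (hz : 0 ≤ z.re) :
    ‖((D : ℂ) * Complex.exp (-z * τ) / (z + δ)) * 2 *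
        (Real.cos (2 * Real.pi * a / n) : ℂ)‖ < w / 2 ∧
    (Complex.exp (-(w : ℂ) * z) ≠ 1 →
      ((D : ℂ) * Complex.exp (-z * τ) / (z + δ)) * 2 *
          (Real.cos (2 * Real.pi * a / n) : ℂ) ≠
        (w : ℂ) / (1 - Complex.exp (-(w : ℂ) * z))) :=
  ring_stability_condition_general D δ w τ hD hδ hw hτ hcond n a z hz
end

section
/- Consider the linearized DDE system (with d > 1 types, delay h > 0): (1+hz)ξ_i = -θ_i/2 + (1/d)∑_j θ_j + (θ_i - (1/d)∑_j θ_j)e^{-zh}, and h z θ_i = (θ_i/2 - ξ_i)e^{-zh}. If x_0 ∈ (0,1) satisfies 1 + x_0/2 - e^{-x_0} - x_0 e^{x_0} - x_0^2 e^{x_0} = 0, and θ = (θ_1,...,θ_d) is any nonzero vector with ∑_j θ_j = 0, then setting z = x_0/h and ξ_i = (1/2 - x_0 e^{x_0}) θ_i gives a nonzero solution of the system with Re(z) > 0. -/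
open Finset

/-- The explicit unstable solution of the linearized DDE system: z = x₀/h > 0 and
ξ_i = r₀ θ_i solve both equations whenever ∑ θ_j = 0. -/
theorem linearized_instability_solution
    (d : ℕ) (hd : 2 ≤ d) (h : ℝ) (hh : 0 < h)
    (x₀ : ℝ) (hx₀ : 0 < x₀ ∧ x₀ < 1)
    (hroot : 1 + x₀ / 2 - Real.exp (-x₀) - x₀ * Real.exp x₀ - x₀ ^ 2 * Real.exp x₀ = 0)
    (r₀ : ℝ) (hr₀ : r₀ = 1 / 2 - x₀ * Real.exp x₀)
    (θ : Fin d → ℝ) (hθ : θ ≠ 0) (hsum : ∑ j, θ j = 0)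
    (z : ℝ) (hz : z = x₀ / h)
    (ξ : Fin d → ℝ) (hξ : ∀ i, ξ i = r₀ * θ i) :
    0 < z ∧
    (∀ i, (1 + h * z) * ξ i =
      -θ i / 2 + (1 / d) * (∑ j, θ j) +
        (θ i - (1 / d) * (∑ j, θ j)) * Real.exp (-z * h)) ∧
    (∀ i, h * z * θ i = (θ i / 2 - ξ i) * Real.exp (-z * h)) := by
  have hhz : h * z = x₀ := by
    rw [hz]; field_simp
  have hnzh : -z * h = -x₀ := by
    have : z * h = x₀ := by rw [mul_comm]; exact hhz
    linarith
  refine ⟨?_, ?_, ?_⟩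
  · rw [hz]; exact div_pos hx₀.1 hh
  · intro i
    rw [hhz, hnzh, hξ i, hsum, hr₀]
    have : Real.exp (-x₀) = 1 + x₀ / 2 - x₀ * Real.exp x₀ - x₀ ^ 2 * Real.exp x₀ := by
      linarith
    rw [this]; ring
  · intro i
    rw [hhz, hnzh, hξ i, hr₀, Real.exp_neg]
    have he : Real.exp x₀ ≠ 0 := Real.exp_ne_zero _
    field_simp
    ring
end

section
/- In the eigenvalue system for the linearized fluid Tangle, if (ξ, θ, z) solves (1+hz)ξ_i = -θ_i/2 + (1/d)∑_j θ_j + (θ_i - (1/d)∑_j θ_j)e^{-zh} and hzθ_i = (θ_i/2 - ξ_i)e^{-zh} for all i, and ∑_j θ_j ≠ 0, then z satisfies 1 + hz = (1/2)e^{-zh}. -/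
open Finset

/-- If (ξ, θ, z) solves the eigenvalue system and ∑ θ_j ≠ 0 (with nondegeneracy
h z ≠ 0 and 1 + h z ≠ 0), then z satisfies 1 + hz = (1/2) e^{-zh}. -/
theorem eigenvalue_scalar_relation
    (d : ℕ) (hd : 1 ≤ d) (h : ℝ) (hh : 0 < h) (z : ℂ)
    (ξ θ : Fin d → ℂ)
    (heq1 : ∀ i, (1 + (h : ℂ) * z) * ξ i =
      -θ i / 2 + (1 / (d : ℂ)) * (∑ j, θ j) +
        (θ i - (1 / (d : ℂ)) * (∑ j, θ j)) * Complex.exp (-z * h))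
    (heq2 : ∀ i, (h : ℂ) * z * θ i = (θ i / 2 - ξ i) * Complex.exp (-z * h))
    (hsum : (∑ j, θ j) ≠ 0)
    (hz0 : (h : ℂ) * z ≠ 0) (hz1 : 1 + (h : ℂ) * z ≠ 0) :
    1 + (h : ℂ) * z = (1 / 2) * Complex.exp (-z * h) := by
  set S : ℂ := ∑ j, θ j with hS
  set Sx : ℂ := ∑ j, ξ j with hSx
  set E : ℂ := Complex.exp (-z * h) with hE
  have hd0 : (d : ℂ) ≠ 0 := by
    exact_mod_cast Nat.cast_ne_zero.mpr (by omega)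
  have hS1 : (1 + (h : ℂ) * z) * Sx = S / 2 := by
    have : ∑ i, (1 + (h : ℂ) * z) * ξ i =
        ∑ i, (-θ i / 2 + (1 / (d : ℂ)) * S + (θ i - (1 / (d : ℂ)) * S) * E) :=
      Finset.sum_congr rfl fun i _ => heq1 i
    rw [← Finset.mul_sum] at this
    rw [this]
    simp only [Finset.sum_add_distrib, Finset.sum_div, ← Finset.sum_neg_distrib,
      Finset.sum_const, Finset.card_univ, Fintype.card_fin, nsmul_eq_mul,
      ← Finset.sum_mul, Finset.sum_sub_distrib]
    field_simp
    simp only [neg_div, Finset.sum_neg_distrib, ← Finset.sum_div, ← hS]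
    ring
  have hS2 : (h : ℂ) * z * S = (S / 2 - Sx) * E := by
    have : ∑ i, (h : ℂ) * z * θ i = ∑ i, (θ i / 2 - ξ i) * E :=
      Finset.sum_congr rfl fun i _ => heq2 i
    rw [← Finset.mul_sum] at this
    rw [this, ← Finset.sum_mul, Finset.sum_sub_distrib, ← Finset.sum_div, ← hS, ← hSx]
  have key : ((h : ℂ) * z * S) * (2 * (1 + (h : ℂ) * z)) = ((h : ℂ) * z * S) * E := by
    linear_combination (2 * (1 + (h : ℂ) * z)) * hS2 - 2 * E * hS1
  have := mul_left_cancel₀ (mul_ne_zero hz0 hsum) key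
  linear_combination this / 2
end

section
/- For the d = 1 fluid Tangle model with constant arrival rate a(t) = 1, the unique time-independent solution is l = 2h, x = h, w = h, and it is locally stable: every complex z in the spectrum of the linearization, i.e., every solution of 1 + hz = (1/2)e^{-zh}, has negative real part. -/
theorem static_solution_eq {h l x : ℝ} (hl : 0 < l) (hflow : l ^ 2 = 2 * x * l)
    (hwindow : l - x = h * (2 * x * l) / l ^ 2) : l = 2 * h ∧ x = h := by
  have hlx : l = 2 * x := by
    apply mul_right_cancel₀ hl.ne'
    linear_combination hflow
  have hx : x ≠ 0 := by rintro rfl; simp [hlx] at hl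
  have hw : l - x = h := by
    rw [hwindow, hlx]
    field_simp
  constructor <;> linarith

theorem one_le_norm_one_add_mul {h : ℝ} {z : ℂ} (hh : 0 ≤ h) (hz : 0 ≤ z.re) :
    1 ≤ ‖1 + (h : ℂ) * z‖ :=
  calc (1 : ℝ) ≤ 1 + h * z.re := le_add_of_nonneg_right (mul_nonneg hh hz)
    _ = (1 + (h : ℂ) * z).re := by simp
    _ ≤ ‖1 + (h : ℂ) * z‖ := Complex.re_le_norm _

theorem norm_mul_exp_neg_le {c z : ℂ} {h : ℝ} (hh : 0 ≤ h) (hz : 0 ≤ z.re) :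
    ‖c * Complex.exp (-z * h)‖ ≤ ‖c‖ := by
  rw [norm_mul, Complex.norm_exp]
  refine mul_le_of_le_one_right (norm_nonneg c) (Real.exp_le_one_iff.mpr ?_)
  simpa using mul_nonneg hz hh

theorem re_neg_of_one_add_mul_eq_mul_exp {c z : ℂ} {h : ℝ} (hh : 0 ≤ h) (hc : ‖c‖ < 1)
    (hz : 1 + (h : ℂ) * z = c * Complex.exp (-z * h)) : z.re < 0 := by
  by_contra! hre
  have hlower := one_le_norm_one_add_mul hh hre
  rw [hz] at hlower
  linarith [norm_mul_exp_neg_le (c := c) hh hre]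

/-- For d = 1 and arrival rate 1, the unique static fluid solution is l = 2h, x = h,
w = h, and it is locally stable: every root of 1 + hz = (1/2) e^{-zh} has Re(z) < 0. -/
theorem single_type_static_solution_stable
    (h : ℝ) (hh : 0 < h) :
    (∀ l x w : ℝ, 0 < l → (l ^ 2 = 2 * x * l) → (l - x = h * (2 * x * l) / l ^ 2) →
      w = l - x → l = 2 * h ∧ x = h ∧ w = h) ∧
    (∀ z : ℂ, 1 + (h : ℂ) * z = (1 / 2) * Complex.exp (-z * h) → z.re < 0) := by
  refine ⟨fun l x w hl hflow hwindow hw => ?_, fun z hz => ?_⟩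
  · obtain ⟨rfl, rfl⟩ := static_solution_eq hl hflow hwindow
    exact ⟨rfl, rfl, by linarith⟩
  · exact re_neg_of_one_add_mul_eq_mul_exp hh.le (by norm_num) hz
end
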